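/- arXiv:1211.2947 — 8 statements merged into one kernel-verified Lean document; each statement's English description precedes it below -/
import Mathlib

section
/- For every nonnegative integer n, the identity ∑_{j=0}^{n} C(n+j, n) · (−E/B + j + 1)_{n−j} · ((A + 2C − E)/(2B))_j · (2C + A + (2nj/(n+j))B − ((n−j)/(n+j))E) = 2B · C(2n, n) · ((A + 2C − E)/(2B))_{n+1} holds as an identity of rational functions in A, B, C, E (with the j = 0 term interpreted via 2C + A − E when n = 0). -/
/-!
With `x = (A + 2C - E)/(2B)` and `y = -E/B` the last factor of the summand is
`2B (x + j (n - y)/(n + j))`, and the resulting hypergeometric sum is Gosper-summable: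
its partial sums are `C(n+m, n) (y+m+1)_{n-m} (x)_{m+1}`, which at `m = n` is the right-hand side.
-/

open Finset Polynomial

lemma ascPochhammer_succ_eval_left {S : Type*} [CommSemiring S] (k : ℕ) (z : S) :
    (ascPochhammer S (k + 1)).eval z = z * (ascPochhammer S k).eval (z + 1) := by
  simp [ascPochhammer_succ_left, eval_comp]

lemma Nat.succ_mul_choose_add_succ (n m : ℕ) :
    (m + 1) * (n + m + 1).choose n = (n + m + 1) * (n + m).choose n := by
  have h := Nat.choose_mul_succ_eq (n + m) n
  rw [show n + m + 1 - n = m + 1 by omega] at h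
  linarith

section Gosper

variable {K : Type*} [Field K] (x y : K) (n : ℕ)

noncomputable def gosperTerm (j : ℕ) : K :=
  ((n + j).choose n : K) * (ascPochhammer K (n - j)).eval (y + j + 1) *
    (ascPochhammer K j).eval x * (x + j * ((n : K) - y) / ((n : K) + j))

noncomputable def gosperPartialSum (m : ℕ) : K :=
  ((n + m).choose n : K) * (ascPochhammer K (n - m)).eval (y + m + 1) *
    (ascPochhammer K (m + 1)).eval x

lemma gosperPartialSum_add_gosperTerm [CharZero K] {m : ℕ} (hm : m + 1 ≤ n) :
    gosperPartialSum x y n m + gosperTerm x y n (m + 1) = gosperPartialSum x y n (m + 1) := by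
  obtain ⟨k, hk⟩ : ∃ k, n - m = k + 1 := ⟨n - (m + 1), by omega⟩
  have hk' : n - (m + 1) = k := by omega
  have hden : (n : K) + (m + 1) ≠ 0 := by exact_mod_cast (show n + (m + 1) ≠ 0 by omega)
  have hchoose : ((m : K) + 1) * ((n + (m + 1)).choose n : K) =
      (n + (m + 1)) * ((n + m).choose n) := by
    exact_mod_cast Nat.succ_mul_choose_add_succ n m
  simp only [gosperTerm, gosperPartialSum, hk, hk']
  rw [ascPochhammer_succ_eval_left, ascPochhammer_succ_eval (m + 1)]
  push_cast
  rw [show y + (m + 1) + 1 = y + m + 1 + 1 by ring]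
  field_simp
  linear_combination (-((ascPochhammer K k).eval (y + m + 1 + 1) *
    (ascPochhammer K (m + 1)).eval x * (y + m + 1))) * hchoose

lemma sum_gosperTerm [CharZero K] {m : ℕ} (hm : m ≤ n) :
    ∑ j ∈ range (m + 1), gosperTerm x y n j = gosperPartialSum x y n m := by
  induction m with
  | zero => simp [gosperTerm, gosperPartialSum, ascPochhammer_succ_right]
  | succ m ih =>
    rw [sum_range_succ, ih (by omega), gosperPartialSum_add_gosperTerm x y n hm]

lemma gosperPartialSum_self :
    gosperPartialSum x y n n = ((2 * n).choose n : K) * (ascPochhammer K (n + 1)).eval x := by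
  simp [gosperPartialSum, two_mul]

end Gosper

lemma summand_lastFactor_eq {K : Type*} [Field K] [CharZero K] (A B C E : K) (hB : B ≠ 0)
    (n j : ℕ) :
    (if n + j = 0 then 2 * C + A - E
      else 2 * C + A + (2 * n * j / (n + j : K)) * B - (((n : K) - j) / (n + j : K)) * E)
    = 2 * B * ((A + 2 * C - E) / (2 * B) + j * ((n : K) - -E / B) / ((n : K) + j)) := by
  split_ifs with h
  · obtain ⟨rfl, rfl⟩ : n = 0 ∧ j = 0 := by omega
    field_simp
    ring
  · have hnj : (n : K) + j ≠ 0 := by exact_mod_cast h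
    field_simp
    ring

/-- the Gosper-summable identity
∑_{j=0}^{n} C(n+j,n) (−E/B+j+1)_{n−j} ((A+2C−E)/(2B))_j
  (2C + A + (2nj/(n+j))B − ((n−j)/(n+j))E) = 2B C(2n,n) ((A+2C−E)/(2B))_{n+1},
as an identity in a field of characteristic 0 with B ≠ 0 (the j = 0 term being
interpreted via 2C + A − E when n = 0). -/
theorem statement0 {K : Type*} [Field K] [CharZero K] (A B C E : K) (hB : B ≠ 0)
    (n : ℕ) :
    ∑ j ∈ range (n + 1),
      ((n + j).choose n : K) *
        (ascPochhammer K (n - j)).eval (-E / B + j + 1) *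
        (ascPochhammer K j).eval ((A + 2 * C - E) / (2 * B)) *
        (if n + j = 0 then 2 * C + A - E
         else 2 * C + A + (2 * n * j / (n + j : K)) * B - (((n : K) - j) / (n + j : K)) * E)
      = 2 * B * ((2 * n).choose n : K) *
          (ascPochhammer K (n + 1)).eval ((A + 2 * C - E) / (2 * B)) := by
  simp_rw [summand_lastFactor_eq A B C E hB, mul_left_comm _ (2 * B)]
  rw [← mul_sum, mul_assoc (2 * B), ← gosperPartialSum_self, ← sum_gosperTerm _ _ n le_rfl]
  rfl
end

section
/- Let P₂(z) = 1 + (−A − 4B − 3C + D)z + (−AD + 2B² + 3BC − 3BD + C² − 3CD)z² and Q₂(z) = 1 + (−2A − 4B − 4C)z + (A² + 3AB + 3AC + 2B² + 6BC + 3C² − CD)z², and R₂ = P₂/Q₂. Then (1 − Az)R₂(z) − Bz²R₂′(z) − CzR₂²(z) − 1 − Dz = −(z⁵/Q₂²(z)) · (A + C + D) · ∏_{ℓ=1}^{2} (ℓAB + AC + CD + ℓ²B² + 2ℓBC + C²). -/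
/-!
Over the common denominator `Q²` the left-hand side is a polynomial of degree at most 5 in `z`.
`P/Q` is the `[2/2]` Padé-type approximant of the Riccati equation, so this numerator vanishes to
order 5 at `z = 0`, and only its `z⁵` coefficient survives; expanding it gives the product.
-/

open Polynomial Finset

noncomputable def riccatiNumerator {K : Type*} [Field K] (a b c d : K) (P Q : K[X]) : K[X] :=
  (1 - C a * X) * (P * Q) - C b * X ^ 2 * (derivative P * Q - P * derivative Q) -
    C c * X * P ^ 2 - (1 + C d * X) * Q ^ 2

theorem riccati_residual_eq_div {K : Type*} [Field K] (a b c d : K) {P Q : K[X]} (hQ : Q ≠ 0) :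
    let φ := algebraMap K[X] (RatFunc K)
    (1 - RatFunc.C a * RatFunc.X) * (φ P / φ Q) -
        RatFunc.C b * RatFunc.X ^ 2 * (φ (derivative P * Q - P * derivative Q) / φ Q ^ 2) -
        RatFunc.C c * RatFunc.X * (φ P / φ Q) ^ 2 - 1 - RatFunc.C d * RatFunc.X
      = φ (riccatiNumerator a b c d P Q) / φ Q ^ 2 := by
  intro φ
  have hφQ : φ Q ≠ 0 := (map_ne_zero_iff _ (IsFractionRing.injective K[X] (RatFunc K))).2 hQ
  field_simp
  simp only [riccatiNumerator, φ, map_sub, map_add, map_mul, map_pow, map_one,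
    RatFunc.algebraMap_C, RatFunc.algebraMap_X]
  ring

theorem riccatiNumerator_pade_two {K : Type*} [Field K] (A B D E : K) :
    riccatiNumerator A B D E
        (C 1 + C (-A - 4 * B - 3 * D + E) * X +
          C (-A * E + 2 * B ^ 2 + 3 * B * D - 3 * B * E + D ^ 2 - 3 * D * E) * X ^ 2)
        (C 1 + C (-2 * A - 4 * B - 4 * D) * X +
          C (A ^ 2 + 3 * A * B + 3 * A * D + 2 * B ^ 2 + 6 * B * D + 3 * D ^ 2 - D * E) * X ^ 2)
      = -(X ^ 5 * C ((A + D + E) *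
          ∏ ℓ ∈ Icc (1 : ℕ) 2,
            ((ℓ : K) * A * B + A * D + D * E + (ℓ : K) ^ 2 * B ^ 2 + 2 * (ℓ : K) * B * D +
              D ^ 2))) := by
  rw [show Icc (1 : ℕ) 2 = {1, 2} from rfl, prod_pair (by decide)]
  simp only [riccatiNumerator, derivative_add, derivative_C, derivative_C_mul_X,
    derivative_C_mul_X_sq]
  simp only [map_sub, map_add, map_mul, map_neg, map_pow, map_ofNat, map_one, Nat.cast_one,
    Nat.cast_ofNat]
  ring

/-- with
P₂(z) = 1 + (−A−4B−3C+D)z + (−AD+2B²+3BC−3BD+C²−3CD)z²,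
Q₂(z) = 1 + (−2A−4B−4C)z + (A²+3AB+3AC+2B²+6BC+3C²−CD)z², and R₂ = P₂/Q₂, one has
(1−Az)R₂ − Bz²R₂′ − CzR₂² − 1 − Dz
  = −(z⁵/Q₂²)(A+C+D)∏_{ℓ=1}^{2}(ℓAB+AC+CD+ℓ²B²+2ℓBC+C²),
as an identity of rational functions (R₂′ computed by the quotient rule). -/
theorem statement5 {K : Type*} [Field K] (A B C D : K) :
    let P : K[X] := Polynomial.C 1 + Polynomial.C (-A - 4 * B - 3 * C + D) * Polynomial.X +
      Polynomial.C (-A * D + 2 * B ^ 2 + 3 * B * C - 3 * B * D + C ^ 2 - 3 * C * D) *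
        Polynomial.X ^ 2
    let Q : K[X] := Polynomial.C 1 + Polynomial.C (-2 * A - 4 * B - 4 * C) * Polynomial.X +
      Polynomial.C (A ^ 2 + 3 * A * B + 3 * A * C + 2 * B ^ 2 + 6 * B * C + 3 * C ^ 2 -
        C * D) * Polynomial.X ^ 2
    let φ := algebraMap K[X] (RatFunc K)
    let R : RatFunc K := φ P / φ Q
    let R' : RatFunc K := φ (derivative P * Q - P * derivative Q) / (φ Q) ^ 2
    (1 - RatFunc.C A * RatFunc.X) * R - RatFunc.C B * RatFunc.X ^ 2 * R' -
        RatFunc.C C * RatFunc.X * R ^ 2 - 1 - RatFunc.C D * RatFunc.X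
      = -(RatFunc.X ^ 5 / (φ Q) ^ 2) *
          RatFunc.C ((A + C + D) *
            ∏ ℓ ∈ Icc (1 : ℕ) 2,
              ((ℓ : K) * A * B + A * C + C * D + (ℓ : K) ^ 2 * B ^ 2 +
                2 * (ℓ : K) * B * C + C ^ 2)) := by
  intro P Q φ R R'
  have hQ : Q ≠ 0 := fun h => by simpa [Q] using congrArg (coeff · 0) h
  rw [riccati_residual_eq_div A B C D hQ, riccatiNumerator_pade_two]
  simp only [φ, map_neg, map_mul, map_pow, RatFunc.algebraMap_X, RatFunc.algebraMap_C]
  ring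
end

section
/- For nonnegative integers a, b with a ≤ b, expanding ((A+2C+E)/2)^b + ((A+2C−E)/2)^b and substituting E² = A² − 4CD yields ∑_{a+d≤b, a,d≥0} (−1)^d A^a C^{b−a−d} D^d · ((a+2d)/(a+d)) · C(a+d, a) · C(b, b−a−2d); in particular, all coefficients of this polynomial in A, C, D are integers. -/
/-!
Put `u = (A + E)/2` and `v = (A - E)/2`, so that `u + v = A` and `u v = C D`; the two bases are
`u + C` and `v + C`. Expanding both binomially leaves the power sums `u^k + v^k`, which equal the
Dickson polynomial of the first kind `D_k(A, C D)`. Its explicit coefficients satisfy a Pascal rule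
that mirrors the recurrence `D_{n+2} = X D_{n+1} - α D_n`, and substituting `k = a + 2d` turns the
result into the stated double sum.
-/

open Finset

theorem Finset.sum_range_sum_sub_two_mul {M : Type*} [AddCommMonoid M] (f : ℕ → ℕ → M) (b : ℕ) :
    ∑ k ∈ range (b + 1), ∑ d ∈ range (k + 1) with 2 * d ≤ k, f (k - 2 * d) d =
      ∑ a ∈ range (b + 1), ∑ d ∈ range (b + 1 - a) with a + 2 * d ≤ b, f a d := by
  rw [sum_sigma', sum_sigma']
  refine sum_nbij' (fun p => ⟨p.1 - 2 * p.2, p.2⟩) (fun p => ⟨p.1 + 2 * p.2, p.2⟩) ?_ ?_ ?_ ?_ ?_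
    <;> rintro ⟨k, d⟩ h
    <;> simp only [mem_sigma, mem_filter, mem_range, Sigma.mk.injEq, heq_eq_eq, and_true] at h ⊢
    <;> omega

namespace Polynomial

/-- `dicksonCoeff a d = (a + 2d)/(a + d) · C(a + d, a)` is the coefficient of `(-α)^d X^a` in
`dickson 1 α (a + 2d)`; the truncated `a + d - 1` makes `dicksonCoeff 0 0 = 2 = dickson 1 α 0`. -/
def dicksonCoeff (a d : ℕ) : ℕ := (a + d).choose a + (a + d - 1).choose a

theorem dicksonCoeff_zero_left (d : ℕ) : dicksonCoeff 0 d = 2 := by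
  cases d <;> simp [dicksonCoeff]

theorem dicksonCoeff_succ_zero (a : ℕ) : dicksonCoeff (a + 1) 0 = 1 := by
  simp [dicksonCoeff]

theorem dicksonCoeff_succ_succ (a d : ℕ) :
    dicksonCoeff (a + 1) (d + 1) = dicksonCoeff a (d + 1) + dicksonCoeff (a + 1) d := by
  simp only [dicksonCoeff, show a + 1 + (d + 1) = a + d + 1 + 1 by omega,
    show a + (d + 1) = a + d + 1 by omega, show a + 1 + d = a + d + 1 by omega,
    Nat.add_sub_cancel, Nat.choose_succ_succ (a + d + 1) a, Nat.choose_succ_succ (a + d) a]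
  ring

variable {R : Type*} [CommRing R]

noncomputable def dicksonTerm (a : R) (n d : ℕ) : R[X] :=
  if 2 * d ≤ n then C ((-a) ^ d * dicksonCoeff (n - 2 * d) d) * X ^ (n - 2 * d) else 0

theorem dicksonTerm_of_lt (a : R) {n d : ℕ} (h : n < 2 * d) : dicksonTerm a n d = 0 :=
  if_neg (by omega)

theorem dicksonTerm_add_two_zero (a : R) (n : ℕ) :
    dicksonTerm a (n + 2) 0 = X * dicksonTerm a (n + 1) 0 := by
  simp [dicksonTerm, dicksonCoeff_succ_zero, pow_succ']

theorem dicksonTerm_add_two_succ (a : R) (n d : ℕ) :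
    dicksonTerm a (n + 2) (d + 1) =
      X * dicksonTerm a (n + 1) (d + 1) - C a * dicksonTerm a n d := by
  rcases lt_trichotomy (n + 2) (2 * (d + 1)) with h | h | h
  · simp [dicksonTerm_of_lt a h, dicksonTerm_of_lt a (show n + 1 < 2 * (d + 1) by omega),
      dicksonTerm_of_lt a (show n < 2 * d by omega)]
  · obtain rfl : n = 2 * d := by omega
    rw [dicksonTerm_of_lt a (show 2 * d + 1 < 2 * (d + 1) by omega), dicksonTerm, dicksonTerm,
      if_pos h.symm.le, if_pos le_rfl, ← h, Nat.sub_self, Nat.sub_self, dicksonCoeff_zero_left,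
      dicksonCoeff_zero_left]
    simp only [map_mul, map_pow, map_neg, map_natCast]
    ring
  · obtain ⟨m, rfl⟩ : ∃ m, n = m + 1 + 2 * d := ⟨n - 1 - 2 * d, by omega⟩
    simp only [dicksonTerm, if_pos (show 2 * (d + 1) ≤ m + 1 + 2 * d + 2 by omega),
      if_pos (show 2 * (d + 1) ≤ m + 1 + 2 * d + 1 by omega),
      if_pos (show 2 * d ≤ m + 1 + 2 * d by omega),
      show m + 1 + 2 * d + 2 - 2 * (d + 1) = m + 1 by omega,
      show m + 1 + 2 * d + 1 - 2 * (d + 1) = m by omega,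
      show m + 1 + 2 * d - 2 * d = m + 1 by omega, dicksonCoeff_succ_succ]
    simp only [Nat.cast_add, map_mul, map_pow, map_neg, map_add, map_natCast]
    ring

theorem sum_dicksonTerm_add_two (a : R) (n : ℕ) :
    ∑ d ∈ range (n + 3), dicksonTerm a (n + 2) d =
      X * ∑ d ∈ range (n + 2), dicksonTerm a (n + 1) d -
        C a * ∑ d ∈ range (n + 1), dicksonTerm a n d := by
  have h_shift : ∑ d ∈ range (n + 2), dicksonTerm a (n + 1) d =
      ∑ d ∈ range (n + 2), dicksonTerm a (n + 1) (d + 1) + dicksonTerm a (n + 1) 0 := by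
    rw [← sum_range_succ' (dicksonTerm a (n + 1)), sum_range_succ _ (n + 2),
      dicksonTerm_of_lt a (by omega : n + 1 < 2 * (n + 2)), add_zero]
  have h_extend : ∑ d ∈ range (n + 2), dicksonTerm a n d =
      ∑ d ∈ range (n + 1), dicksonTerm a n d := by
    rw [sum_range_succ, dicksonTerm_of_lt a (by omega : n < 2 * (n + 1)), add_zero]
  rw [sum_range_succ', h_shift, ← h_extend]
  simp only [dicksonTerm_add_two_succ, dicksonTerm_add_two_zero, sum_sub_distrib, ← mul_sum]
  ring

theorem dickson_one_eq_sum_dicksonTerm (a : R) :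
    ∀ n : ℕ, dickson 1 a n = ∑ d ∈ range (n + 1), dicksonTerm a n d
  | 0 => by simp [dicksonTerm, dicksonCoeff]; norm_num; rfl
  | 1 => by simp [dicksonTerm, dicksonCoeff, sum_range_succ]
  | n + 2 => by
    rw [dickson_add_two, sum_dicksonTerm_add_two, dickson_one_eq_sum_dicksonTerm a n,
      dickson_one_eq_sum_dicksonTerm a (n + 1)]

theorem dickson_one_eq_sum (a : R) (n : ℕ) :
    dickson 1 a n = ∑ d ∈ range (n + 1) with 2 * d ≤ n,
      C ((-a) ^ d * dicksonCoeff (n - 2 * d) d) * X ^ (n - 2 * d) := by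
  rw [dickson_one_eq_sum_dicksonTerm, sum_filter]
  rfl

theorem dickson_one_eval_add (x y : R) :
    ∀ n, (dickson 1 (x * y) n).eval (x + y) = x ^ n + y ^ n
  | 0 => by simp; norm_num
  | 1 => by simp
  | n + 2 => by
    simp only [dickson_add_two, eval_sub, eval_mul, eval_X, eval_C, dickson_one_eval_add x y n,
      dickson_one_eval_add x y (n + 1)]
    ring

theorem pow_add_pow_eq_sum (x y : R) (n : ℕ) :
    x ^ n + y ^ n = ∑ d ∈ range (n + 1) with 2 * d ≤ n,
      (-(x * y)) ^ d * dicksonCoeff (n - 2 * d) d * (x + y) ^ (n - 2 * d) := by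
  rw [← dickson_one_eval_add, dickson_one_eq_sum, eval_finsetSum]
  simp only [eval_mul, eval_C, eval_X, eval_pow]

end Polynomial

/-- if E² = A² − 4CD, then
((A+2C+E)/2)^b + ((A+2C−E)/2)^b
  = ∑_{a+d≤b} (−1)^d A^a C^{b−a−d} D^d (C(a+d,a)+C(a+d−1,a)) C(b,b−a−2d);
in particular this polynomial in A, C, D has integer coefficients. (Here
(a+2d)/(a+d)·C(a+d,a) = C(a+d,a)+C(a+d−1,a), and C(b,b−a−2d) is zero when
a+2d > b, i.e. it equals C(b,a+2d).) -/
theorem statement8 {K : Type*} [Field K] [CharZero K] (A C D E : K)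
    (hE : E ^ 2 = A ^ 2 - 4 * C * D) (b : ℕ) :
    ((A + 2 * C + E) / 2) ^ b + ((A + 2 * C - E) / 2) ^ b
      = ∑ a ∈ range (b + 1), ∑ d ∈ range (b + 1 - a),
          (-1) ^ d * A ^ a * C ^ (b - a - d) * D ^ d *
            (((a + d).choose a + (a + d - 1).choose a : ℕ) : K) *
            (b.choose (a + 2 * d) : K) := by
  set u := (A + E) / 2
  set v := (A - E) / 2
  have hsum : u + v = A := by ring
  have hprod : u * v = C * D := by linear_combination (-hE) / 4
  let g (a d : ℕ) : K :=
    (-1) ^ d * A ^ a * C ^ (b - a - d) * D ^ d * (Polynomial.dicksonCoeff a d : K) *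
      (b.choose (a + 2 * d) : K)
  calc ((A + 2 * C + E) / 2) ^ b + ((A + 2 * C - E) / 2) ^ b
      = (u + C) ^ b + (v + C) ^ b := by ring
    _ = ∑ k ∈ range (b + 1), (u ^ k + v ^ k) * C ^ (b - k) * b.choose k := by
      rw [add_pow, add_pow, ← sum_add_distrib]
      exact sum_congr rfl fun k _ => by ring
    _ = ∑ k ∈ range (b + 1), ∑ d ∈ range (k + 1) with 2 * d ≤ k, g (k - 2 * d) d := by
      refine sum_congr rfl fun k hk => ?_
      rw [Polynomial.pow_add_pow_eq_sum, hsum, hprod, sum_mul, sum_mul]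
      refine sum_congr rfl fun d hd => ?_
      simp only [mem_range, mem_filter] at hk hd
      obtain ⟨a, rfl⟩ : ∃ a, k = a + 2 * d := ⟨k - 2 * d, by omega⟩
      obtain ⟨c, rfl⟩ : ∃ c, b = a + 2 * d + c := ⟨b - (a + 2 * d), by omega⟩
      simp only [g, Nat.add_sub_cancel, show a + 2 * d + c - a - d = c + d by omega,
        show a + 2 * d + c - (a + 2 * d) = c by omega]
      ring
    _ = ∑ a ∈ range (b + 1), ∑ d ∈ range (b + 1 - a) with a + 2 * d ≤ b, g a d :=
      sum_range_sum_sub_two_mul g b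
    _ = _ := by
      refine sum_congr rfl fun a _ => sum_filter_of_ne fun d _ hne => ?_
      contrapose! hne
      simp [g, Nat.choose_eq_zero_of_lt hne]
end

section
/- Let p ≥ 5 be prime. The sequence (f_λ)_{λ≥1} of numbers of free subgroups of index 6λ in PSL₂(ℤ), defined by f_0 = 1 and the coefficient recursion of (1 − 4z)F − 6z²F′ − zF² − 1 = 0, is ultimately periodic modulo p^α for every α ≥ 1. -/
/-!
With `wₙ = (6n)! / ((3n)! (2n)! 72ⁿ)`, the series `W = ∑ wₙ zⁿ` solves the hypergeometric
equation `6W' = 36θ²W + 36θW + 5W` (`θ = z d/dz`), and this linearises the Riccati equation: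
`F W = W + 6zW'`, i.e. `∑_{i+j=n} wᵢ f_j = (6n+1) wₙ`. For `p ≥ 5` the number `72` is a unit
modulo `p^α`, and `n!` divides `(6n)! / ((3n)! (2n)!)`, so modulo `p^α` the series `W` is a
polynomial of degree `< αp` with constant term `1`. Hence `f` satisfies, modulo `p^α`, a
linear recurrence with constant coefficients, and a recurrence of fixed order over the finite
ring `ℤ/p^α` is ultimately periodic by the pigeonhole principle.
-/

open PowerSeries Finset
open scoped Nat

theorem exists_eventually_periodic_of_recurrence {α : Type*} [Finite α] {d N : ℕ}
    (a : ℕ → α) (Φ : (Fin d → α) → α)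
    (h : ∀ n, N ≤ n → a (n + d) = Φ fun j => a (n + j)) :
    ∃ N' T : ℕ, 1 ≤ T ∧ ∀ n, N' ≤ n → a (n + T) = a n := by
  set w : ℕ → Fin d → α := fun m j => a (N + m + j) with hw
  have hnext : ∀ m, a (N + m + d) = Φ (w m) := fun m => h _ (Nat.le_add_right N m)
  obtain ⟨i, k, hik, hwik⟩ : ∃ i k, i < k ∧ w i = w k := by
    obtain ⟨i, k, hne, heq⟩ := Finite.exists_ne_map_eq_of_infinite w
    rcases hne.lt_or_gt with hlt | hlt
    exacts [⟨i, k, hlt, heq⟩, ⟨k, i, hlt, heq.symm⟩]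
  have hshift : ∀ t, w (i + t) = w (k + t) := by
    intro t
    induction t with
    | zero => exact hwik
    | succ t ih =>
      funext j
      by_cases hj : (j : ℕ) + 1 < d
      · have := congrFun ih ⟨j + 1, hj⟩
        simp only [hw] at this ⊢
        rwa [show N + (i + t) + (j + 1) = N + (i + (t + 1)) + j by omega,
          show N + (k + t) + (j + 1) = N + (k + (t + 1)) + j by omega] at this
      · simp only [hw]
        rw [show N + (i + (t + 1)) + j = N + (i + t) + d by omega,
          show N + (k + (t + 1)) + j = N + (k + t) + d by omega, hnext, hnext, ih]
  refine ⟨N + i + d, k - i, by omega, fun n hn => ?_⟩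
  obtain ⟨t, rfl⟩ : ∃ t, n = N + (i + t) + d := ⟨n - (N + i + d), by omega⟩
  rw [show N + (i + t) + d + (k - i) = N + (k + t) + d by omega, hnext, hnext, hshift]

theorem add_eq_neg_sum_of_convolution_eq_zero {R : Type*} [CommRing R] {a c : ℕ → R} {D : ℕ}
    (hc0 : c 0 = 1) (hc : ∀ k, D < k → c k = 0)
    (hac : ∀ n, D ≤ n → ∑ ij ∈ antidiagonal n, c ij.1 * a ij.2 = 0) (n : ℕ) :
    a (n + D) = -∑ j : Fin D, c (D - j) * a (n + j) := by
  have h := hac (n + D) (Nat.le_add_left D n)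
  rw [Nat.sum_antidiagonal_eq_sum_range_succ (fun i j => c i * a j),
    ← sum_subset (range_subset_range.2 (by omega : D + 1 ≤ (n + D).succ))
      (fun k _ hk => by rw [hc k (by simp at hk; omega), zero_mul]),
    sum_range_succ', hc0, one_mul, ← sum_range_reflect] at h
  rw [Fin.sum_univ_eq_sum_range (fun j => c (D - j) * a (n + j)), eq_neg_iff_add_eq_zero, ← h,
    add_comm]
  refine congrArg₂ _ (sum_congr rfl fun j hj => ?_) rfl
  rw [mem_range] at hj
  rw [show D - 1 - j + 1 = D - j by omega, show n + D - (D - j) = n + j by omega]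

def factorialQuotient (n : ℕ) : ℕ := (6 * n).choose (3 * n) * (3 * n).choose n * n !

namespace factorialQuotient

theorem mul_factorial_mul_factorial (n : ℕ) :
    factorialQuotient n * (3 * n)! * (2 * n)! = (6 * n)! := by
  have h3 := Nat.choose_mul_factorial_mul_factorial (show n ≤ 3 * n by omega)
  have h6 := Nat.choose_mul_factorial_mul_factorial (show 3 * n ≤ 6 * n by omega)
  rw [show 3 * n - n = 2 * n by omega] at h3
  rw [show 6 * n - 3 * n = 3 * n by omega] at h6
  rw [← h6, ← h3, factorialQuotient]
  ring

theorem succ_mul (n : ℕ) :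
    (n + 1) * factorialQuotient (n + 1) = 12 * (6 * n + 1) * (6 * n + 5) * factorialQuotient n := by
  have hq : ∀ m, (factorialQuotient m : ℚ) = (6 * m)! / ((3 * m)! * (2 * m)!) := fun m => by
    rw [eq_div_iff (by positivity), ← mul_assoc]; exact_mod_cast mul_factorial_mul_factorial m
  have : ((n + 1) * factorialQuotient (n + 1) : ℚ)
      = 12 * (6 * n + 1) * (6 * n + 5) * factorialQuotient n := by
    rw [hq, hq, show 6 * (n + 1) = 6 * n + 1 + 1 + 1 + 1 + 1 + 1 by ring,
      show 3 * (n + 1) = 3 * n + 1 + 1 + 1 by ring, show 2 * (n + 1) = 2 * n + 1 + 1 by ring]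
    simp only [Nat.factorial_succ]
    push_cast
    field_simp
    ring
  exact_mod_cast this

theorem pow_dvd {p a n : ℕ} (hp : 0 < p) (hn : a * p ≤ n) : p ^ a ∣ factorialQuotient n := by
  have hfac : p ^ a ∣ (a * p)! := by
    have := Nat.prod_factorial_dvd_factorial_sum (range a) (fun _ => p)
    rw [prod_const, card_range, sum_const, card_range, smul_eq_mul] at this
    exact (pow_dvd_pow_of_dvd (Nat.dvd_factorial hp le_rfl) a).trans this
  exact hfac.trans ((Nat.factorial_dvd_factorial hn).trans (Dvd.intro_left _ rfl))

end factorialQuotient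

section PowerSeries

variable {R : Type*} [CommRing R]

theorem coeff_X_mul_derivative (f : R⟦X⟧) (n : ℕ) :
    coeff n (X * d⁄dX R f) = n * coeff n f := by
  cases n with
  | zero => simp
  | succ n => rw [coeff_succ_X_mul, coeff_derivative]; push_cast; ring

theorem eq_zero_of_eq_X_mul {V G : R⟦X⟧} {a : R}
    (h : V = X * (G * V + C a * (X * d⁄dX R V))) : V = 0 := by
  ext n
  rw [map_zero]
  induction n using Nat.strong_induction_on with
  | _ n ih =>
    rw [h]
    cases n with
    | zero => simp
    | succ m =>
      rw [coeff_succ_X_mul, map_add, coeff_C_mul, coeff_X_mul_derivative, coeff_mul,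
        ih m m.lt_succ_self, mul_zero, mul_zero, add_zero]
      refine sum_eq_zero fun ij hij => ?_
      rw [ih ij.2 (Nat.antidiagonal.snd_lt hij), mul_zero]

theorem hypergeometric_ode {c : ℕ → R}
    (hc : ∀ n : ℕ, 6 * (n + 1) * c (n + 1) = (6 * n + 1) * (6 * n + 5) * c n) :
    6 * d⁄dX R (PowerSeries.mk c) = 36 * (X * d⁄dX R (X * d⁄dX R (PowerSeries.mk c)))
      + 36 * (X * d⁄dX R (PowerSeries.mk c)) + 5 * PowerSeries.mk c := by
  ext n
  rw [← map_ofNat C 6, ← map_ofNat C 36, ← map_ofNat C 5]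
  simp only [map_add, coeff_C_mul, coeff_X_mul_derivative, coeff_derivative, coeff_mk]
  linear_combination hc n

theorem mul_eq_of_riccati {F W : R⟦X⟧}
    (hF : (1 - 4 * X) * F - 6 * X ^ 2 * d⁄dX R F - X * F ^ 2 - 1 = 0)
    (hW : 6 * d⁄dX R W = 36 * (X * d⁄dX R (X * d⁄dX R W)) + 36 * (X * d⁄dX R W) + 5 * W) :
    F * W = W + 6 * (X * d⁄dX R W) := by
  have h6 : d⁄dX R (6 : R⟦X⟧) = 0 := by rw [← map_ofNat C 6, derivative_C]
  set V := F * W - W - 6 * (X * d⁄dX R W) with hVdef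
  have hV : V = X * ((5 + F) * V + C 6 * (X * d⁄dX R V)) := by
    simp only [hVdef, map_sub, Derivation.leibniz, h6, derivative_X, smul_eq_mul,
      mul_zero, add_zero, mul_one, map_ofNat C 6] at hW ⊢
    linear_combination W * hF - X * hW
  linear_combination eq_zero_of_eq_X_mul hV

theorem derivative_map {S T : Type*} [CommSemiring S] [CommSemiring T] (g : S →+* T)
    (f : S⟦X⟧) :
    d⁄dX T (map g f) = map g (d⁄dX S f) := by
  ext n
  simp [coeff_derivative]

theorem factorialQuotient.scaled_recurrence {u : R} (hu : 72 * u = 1) (n : ℕ) :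
    6 * (n + 1) * (factorialQuotient (n + 1) * u ^ (n + 1))
      = (6 * n + 1) * (6 * n + 5) * (factorialQuotient n * u ^ n) := by
  have h : ((n + 1) * factorialQuotient (n + 1) : R)
      = 12 * (6 * n + 1) * (6 * n + 5) * factorialQuotient n := by
    exact_mod_cast congrArg (Nat.cast : ℕ → R) (factorialQuotient.succ_mul n)
  linear_combination (6 * u ^ (n + 1)) * h
    + ((6 * n + 1) * (6 * n + 5) * factorialQuotient n * u ^ n) * hu

theorem convolution_eq_of_riccati {f : ℕ → ℤ}
    (hf : (1 - 4 * X) * PowerSeries.mk f - 6 * X ^ 2 * d⁄dX ℤ (PowerSeries.mk f) -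
      X * (PowerSeries.mk f) ^ 2 - 1 = 0) {u : R} (hu : 72 * u = 1) (n : ℕ) :
    ∑ ij ∈ antidiagonal n, factorialQuotient ij.1 * u ^ ij.1 * (f ij.2 : R)
      = (6 * n + 1) * (factorialQuotient n * u ^ n) := by
  have hF := congrArg (map (Int.castRingHom R)) hf
  simp only [map_sub, map_mul, map_pow, map_one, map_zero, map_ofNat, map_X,
    ← derivative_map] at hF
  have hW := hypergeometric_ode (c := fun k => (factorialQuotient k * u ^ k : R))
    (factorialQuotient.scaled_recurrence hu)
  have hmul := congrArg (coeff n) (mul_eq_of_riccati hF hW)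
  rw [mul_comm, coeff_mul, map_add, ← map_ofNat C 6, coeff_C_mul, coeff_X_mul_derivative] at hmul
  simp only [coeff_mk, coeff_map, eq_intCast] at hmul
  linear_combination hmul

end PowerSeries

theorem statement11_general (f : ℕ → ℤ)
    (hf : (1 - 4 * X) * PowerSeries.mk f - 6 * X ^ 2 * (PowerSeries.mk f).derivativeFun -
      X * (PowerSeries.mk f) ^ 2 - 1 = 0)
    (p : ℕ) (hp : p.Prime) (hp5 : 5 ≤ p) (α : ℕ) :
    ∃ N T : ℕ, 1 ≤ T ∧ ∀ lam : ℕ, N ≤ lam → f (lam + T) ≡ f lam [ZMOD (p ^ α : ℕ)] := by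
  have : NeZero (p ^ α) := ⟨pow_ne_zero α hp.ne_zero⟩
  have hcop : Nat.Coprime 72 (p ^ α) := by
    have h2 := (Nat.coprime_primes Nat.prime_two hp).2 (by omega)
    have h3 := (Nat.coprime_primes Nat.prime_three hp).2 (by omega)
    exact Nat.Coprime.pow_right α (Nat.Coprime.mul_left (h2.pow_left 3) (h3.pow_left 2))
  set u := (72 : ZMod (p ^ α))⁻¹
  have hu : (72 : ZMod (p ^ α)) * u = 1 := by exact_mod_cast ZMod.coe_mul_inv_eq_one 72 hcop
  set c : ℕ → ZMod (p ^ α) := fun n => factorialQuotient n * u ^ n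
  have hc : ∀ n, α * p ≤ n → c n = 0 := fun n hn => by
    simp only [c, (ZMod.natCast_eq_zero_iff _ _).2 (factorialQuotient.pow_dvd hp.pos hn), zero_mul]
  have hrec := add_eq_neg_sum_of_convolution_eq_zero (a := fun n => (f n : ZMod (p ^ α)))
    (by simp [c, factorialQuotient]) (fun k hk => hc k hk.le)
    (fun n hn => by rw [convolution_eq_of_riccati hf hu]; exact mul_eq_zero_of_right _ (hc n hn))
  obtain ⟨N, T, hT, hper⟩ := exists_eventually_periodic_of_recurrence (N := 0)
    (fun n => (f n : ZMod (p ^ α))) (fun v => -∑ j : Fin (α * p), c (α * p - j) * v j)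
    fun n _ => hrec n
  exact ⟨N, T, hT, fun n hn => (ZMod.intCast_eq_intCast_iff _ _ _).1 (hper n hn)⟩

/-- for every prime p ≥ 5, the sequence (f_λ) of free subgroup
numbers of PSL₂(ℤ) — i.e. the coefficient sequence of the unique power series
solution with f₀ = 1 of (1−4z)F − 6z²F′ − zF² − 1 = 0 — is ultimately periodic
modulo p^α for every α ≥ 1. -/
theorem statement11 (f : ℕ → ℤ) (hf0 : f 0 = 1)
    (hf : (1 - 4 * X) * PowerSeries.mk f - 6 * X ^ 2 * (PowerSeries.mk f).derivativeFun -
      X * (PowerSeries.mk f) ^ 2 - 1 = 0)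
    (p : ℕ) (hp : p.Prime) (hp5 : 5 ≤ p) (α : ℕ) (hα : 1 ≤ α) :
    ∃ N T : ℕ, 1 ≤ T ∧ ∀ lam : ℕ, N ≤ lam → f (lam + T) ≡ f lam [ZMOD (p ^ α : ℕ)] :=
  statement11_general f hf p hp hp5 α
end

section
/- For integers k ≥ 2 and α ≥ 1, the sequence ℓ ↦ 7^{k−1} · C(k+ℓ−1, k−1), taken modulo 7^α, is periodic with period length dividing 7^{α−1}. -/
/-!
Writing `k! · C(ℓ + k, k) = (ℓ + 1)(ℓ + 2)⋯(ℓ + k)` shows that `k! · C(ℓ + k, k)` is periodic in `ℓ`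
modulo any `n`, with period `n`. Taking `n = p^β`, the part of `k!` prime to `p` can be cancelled,
leaving `p^{v_p(k!)}`; since `v_p(k!) < k`, multiplying by the remaining `p^{k - v_p(k!)}` gains
at least one more power of `p` in the modulus.
-/

open Nat

theorem Nat.ModEq.ascFactorial {n a b : ℕ} (h : a ≡ b [MOD n]) (k : ℕ) :
    a.ascFactorial k ≡ b.ascFactorial k [MOD n] := by
  induction k with
  | zero => rfl
  | succ k ih => simpa only [ascFactorial_succ] using (h.add_right k).mul ih

theorem Nat.factorial_mul_choose_add_modEq (n ℓ k : ℕ) :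
    k ! * (ℓ + n + k).choose k ≡ k ! * (ℓ + k).choose k [MOD n] := by
  rw [← ascFactorial_eq_factorial_mul_choose, ← ascFactorial_eq_factorial_mul_choose]
  refine Nat.ModEq.ascFactorial ?_ k
  rw [add_right_comm]
  exact Nat.add_mod_right (ℓ + 1) n

theorem Nat.ModEq.ordProj_mul_of_mul {p n β x y : ℕ} (hp : p.Prime) (hn : n ≠ 0)
    (h : n * x ≡ n * y [MOD p ^ β]) : ordProj[p] n * x ≡ ordProj[p] n * y [MOD p ^ β] := by
  refine Nat.ModEq.cancel_left_of_coprime ((coprime_ordCompl hp hn).pow_left β) ?_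
  rwa [← mul_assoc, ← mul_assoc, mul_comm (ordCompl[p] n), ordProj_mul_ordCompl_eq_self]

theorem Nat.Prime.pow_mul_choose_add_pow_modEq {p : ℕ} (hp : p.Prime) (β ℓ k : ℕ) :
    p ^ k * (ℓ + p ^ β + k).choose k ≡ p ^ k * (ℓ + k).choose k [MOD p ^ (β + 1)] := by
  rcases Nat.eq_zero_or_pos k with rfl | hk
  · simp [Nat.ModEq.refl]
  have : Fact p.Prime := ⟨hp⟩
  have hvk : (k !).factorization p < k := by
    rw [factorization_def _ hp]
    exact padicValNat_factorial_lt_of_ne_zero p hk.ne'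
  have h := ((factorial_mul_choose_add_modEq (p ^ β) ℓ k).ordProj_mul_of_mul hp
    (factorial_ne_zero k)).mul_left' (p ^ (k - (k !).factorization p))
  rw [← mul_assoc, ← mul_assoc, ← pow_add, ← pow_add, Nat.sub_add_cancel hvk.le] at h
  exact h.of_dvd (pow_dvd_pow p (by omega))

/-- for k ≥ 2 and α ≥ 1, the sequence ℓ ↦ 7^{k−1}·C(k+ℓ−1, k−1) is
periodic modulo 7^α with period length dividing 7^{α−1}; in particular 7^{α−1}
itself is a period. -/
theorem statement14 (k α : ℕ) (hk : 2 ≤ k) (hα : 1 ≤ α) :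
    ∀ ℓ : ℕ,
      7 ^ (k - 1) * ((k + (ℓ + 7 ^ (α - 1)) - 1).choose (k - 1)) ≡
        7 ^ (k - 1) * ((k + ℓ - 1).choose (k - 1)) [MOD 7 ^ α] := by
  intro ℓ
  obtain ⟨j, rfl⟩ : ∃ j, k = j + 1 := ⟨k - 1, by omega⟩
  obtain ⟨β, rfl⟩ : ∃ β, α = β + 1 := ⟨α - 1, by omega⟩
  have key := Nat.prime_seven.pow_mul_choose_add_pow_modEq β ℓ j
  have shift (m : ℕ) : j + 1 + m - 1 = m + j := by omega
  rwa [Nat.add_sub_cancel, Nat.add_sub_cancel, shift, shift]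
end

section
/- Let p be a prime with p ≡ 1 (mod 6), and let n, k, j be nonnegative integers with j ≤ k, k ≤ n − (p−1)/6 − 1, and n ≡ (p−1)/6 (mod p). Then the p-adic valuation of (1/k!) · C(k, j) · (5/6 − j)_{n+k+1} / (2/3 − j)_{k+1} is at least 1, where the Pochhammer symbols are interpreted p-adically (i.e., the rational number in question, which has p-integral denominator since the fractions 5/6, 2/3 make sense mod powers of p, is divisible by p). -/
/-!
Writing `5/6 - j + i = (6i - 6j + 5)/6`, `2/3 - j + i = (3i - 3j + 2)/3` and
`C(k, j)/k! = 1/(j! (k-j)!)`, the valuation becomes a sum over levels `a ≥ 1` of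
`N_a - D_a - ⌊j/p^a⌋ - ⌊(k-j)/p^a⌋`, where `N_a` counts the `i ≤ n + k` with `p^a ∣ 6i - 6j + 5`
and `D_a` the `i ≤ k` with `p^a ∣ 3i - 3j + 2`. For `p^a = 6t + 1` these are the residue classes
of `j + 5t` and `j + 4t` modulo `p^a`, which differ by `t`; since `n > k` this gives
`N_a ≥ D_a + ⌊j/p^a⌋ + ⌊(k-j)/p^a⌋` at every level, and at level `1` the hypotheses
`n ≡ (p-1)/6 (mod p)` and `n > k + (p-1)/6` supply one more multiple of `p`.
-/

open Polynomial Finset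

lemma ascPochhammer_eval_eq_prod_range {R : Type*} [CommSemiring R] (n : ℕ) (x : R) :
    (ascPochhammer R n).eval x = ∏ i ∈ range n, (x + i) := by
  induction n with
  | zero => simp
  | succ n ih => simp [ascPochhammer_succ_right, prod_range_succ, ih]

lemma ascPochhammer_eval_div_eq_prod {c : ℕ} (hc : c ≠ 0) (d : ℤ) (M : ℕ) :
    (ascPochhammer ℚ M).eval ((d : ℚ) / c) = ∏ i ∈ range M, (((c * i + d : ℤ) : ℚ) / c) := by
  rw [ascPochhammer_eval_eq_prod_range]
  refine prod_congr rfl fun i _ => ?_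
  push_cast
  field_simp
  ring

lemma ascPochhammer_eval_div_ne_zero {c : ℕ} (hc : c ≠ 0) (d : ℤ) {M : ℕ}
    (hne : ∀ i < M, (c * i + d : ℤ) ≠ 0) : (ascPochhammer ℚ M).eval ((d : ℚ) / c) ≠ 0 := by
  rw [ascPochhammer_eval_div_eq_prod hc]
  exact prod_ne_zero_iff.2 fun i hi =>
    div_ne_zero (Int.cast_ne_zero.2 (hne i (mem_range.1 hi))) (Nat.cast_ne_zero.2 hc)

section padicValRat

variable {p : ℕ} [hp : Fact p.Prime]

lemma padicValRat.prod {ι : Type*} {s : Finset ι} {f : ι → ℚ} (hf : ∀ i ∈ s, f i ≠ 0) :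
    padicValRat p (∏ i ∈ s, f i) = ∑ i ∈ s, padicValRat p (f i) := by
  classical
  induction s using Finset.induction_on with
  | empty => simp
  | insert a s ha ih =>
    rw [prod_insert ha, sum_insert ha, padicValRat.mul (hf a (mem_insert_self a s))
      (prod_ne_zero_iff.2 fun i hi => hf i (mem_insert_of_mem hi)),
      ih fun i hi => hf i (mem_insert_of_mem hi)]

lemma padicValRat_intCast_eq_card_pow_dvd {m : ℤ} (hm : m ≠ 0) {b : ℕ} (hb : m.natAbs < p ^ b) :
    padicValRat p m = #{a ∈ Ico 1 b | ((p ^ a : ℕ) : ℤ) ∣ m} := by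
  rw [padicValRat.of_int, padicValInt, ← Nat.factorization_def _ hp.out,
    Nat.factorization_eq_card_pow_dvd_of_lt hp.out (Int.natAbs_pos.2 hm) hb]
  simp only [Int.natCast_dvd]

lemma padicValRat_ascPochhammer_eval_div {c : ℕ} (hc : ¬ p ∣ c) (d : ℤ) {M b : ℕ}
    (hne : ∀ i < M, (c * i + d : ℤ) ≠ 0) (hb : ∀ i < M, (c * i + d : ℤ).natAbs < p ^ b) :
    padicValRat p ((ascPochhammer ℚ M).eval ((d : ℚ) / c))
      = (∑ a ∈ Ico 1 b, #{i ∈ range M | ((p ^ a : ℕ) : ℤ) ∣ c * ((i : ℕ) : ℤ) + d} : ℕ) := by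
  have hc0 : c ≠ 0 := by rintro rfl; exact hc (dvd_zero p)
  have hcq : (c : ℚ) ≠ 0 := Nat.cast_ne_zero.2 hc0
  have hfactor (i : ℕ) (hi : i ∈ range M) : padicValRat p (((c * i + d : ℤ) : ℚ) / c)
      = #{a ∈ Ico 1 b | ((p ^ a : ℕ) : ℤ) ∣ c * (i : ℤ) + d} := by
    rw [mem_range] at hi
    rw [padicValRat.div (Int.cast_ne_zero.2 (hne i hi)) hcq, ← padicValRat_of_nat,
      padicValNat.eq_zero_of_not_dvd hc, padicValRat_intCast_eq_card_pow_dvd (hne i hi) (hb i hi)]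
    simp
  rw [ascPochhammer_eval_div_eq_prod hc0, padicValRat.prod fun i hi =>
      div_ne_zero (Int.cast_ne_zero.2 (hne i (mem_range.1 hi))) hcq,
    sum_congr rfl hfactor]
  simp only [card_filter, Nat.cast_sum]
  rw [sum_comm]

end padicValRat

lemma dvd_mul_add_iff_dvd_sub {R : Type*} [CommRing R] {P c d s x : R} (hcop : IsCoprime P c)
    (hs : P ∣ c * s + d) : P ∣ c * x + d ↔ P ∣ x - s := by
  rw [show c * x + d = c * (x - s) + (c * s + d) by ring, dvd_add_left hs]
  exact ⟨hcop.dvd_of_dvd_mul_left, (Dvd.dvd.mul_left · c)⟩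

lemma Nat.count_modEq_eq_div {P : ℕ} (hP : 0 < P) (v M : ℕ) :
    M.count (· ≡ v [MOD P]) = (M + P - 1 - v % P) / P := by
  have hv := Nat.mod_lt v hP
  have hM := Nat.mod_lt M hP
  have hdecomp : M + P - 1 - v % P = P * (M / P) + (M % P + P - 1 - v % P) := by
    have := Nat.div_add_mod M P
    omega
  rw [Nat.count_modEq_card M hP, hdecomp, Nat.mul_add_div hP]
  congr 1
  split_ifs
  · exact (Nat.div_eq_of_lt_le (by omega) (by omega)).symm
  · exact (Nat.div_eq_of_lt (by omega)).symm

lemma card_filter_dvd_mul_add {P s c : ℕ} (hP : 0 < P) {d : ℤ} (hcop : IsCoprime (P : ℤ) c)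
    (hs : (P : ℤ) ∣ c * s + d) (M : ℕ) :
    #{i ∈ range M | (P : ℤ) ∣ c * ((i : ℕ) : ℤ) + d} = (M + P - 1 - s % P) / P := by
  rw [← Nat.count_modEq_eq_div hP, Nat.count_eq_card_filter_range]
  refine congrArg card (filter_congr fun i _ => ?_)
  rw [dvd_mul_add_iff_dvd_sub hcop hs, Nat.ModEq.comm, Nat.modEq_iff_dvd]

lemma Nat.add_mod_le_mod_add (a b n : ℕ) : (a + b) % n ≤ a % n + b := by
  rw [Nat.add_mod]
  exact (Nat.mod_le _ _).trans (Nat.add_le_add_left (Nat.mod_le _ _) _)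

lemma Finset.one_add_sum_Ico_le {f g : ℕ → ℕ} {b : ℕ} (hb : 1 < b) (h1 : f 1 < g 1)
    (h : ∀ a ∈ Ico 2 b, f a ≤ g a) : 1 + ∑ a ∈ Ico 1 b, f a ≤ ∑ a ∈ Ico 1 b, g a := by
  rw [sum_eq_sum_Ico_succ_bot hb, sum_eq_sum_Ico_succ_bot hb, ← add_assoc, add_comm 1]
  exact add_le_add h1 (sum_le_sum h)

lemma one_div_factorial_mul_choose_mul_div {K : Type*} [Field K] [CharZero K] {k j : ℕ}
    (hj : j ≤ k) (x y : K) :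
    1 / (k.factorial : K) * k.choose j * x / y = x / (j.factorial * (k - j).factorial * y) := by
  have hC : (k.choose j : K) ≠ 0 := Nat.cast_ne_zero.2 (Nat.choose_pos hj).ne'
  rw [← Nat.choose_mul_factorial_mul_factorial hj]
  push_cast
  field_simp

-- With `P = 6 t + 1` we have `5 / 6 ≡ -5 t` and `2 / 3 ≡ -4 t` modulo `P`.
section Levels

variable {P t n k j : ℕ}

lemma card_filter_dvd_six_mul_add (hP : P = 6 * t + 1) (M : ℕ) :
    #{i ∈ range M | (P : ℤ) ∣ 6 * ((i : ℕ) : ℤ) + (5 - 6 * j)}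
      = (M + P - 1 - (j + 5 * t) % P) / P := by
  refine card_filter_dvd_mul_add (c := 6) (by omega) ⟨1, -t, ?_⟩ ⟨5, ?_⟩ M <;>
    (subst hP; push_cast; ring)

lemma card_filter_dvd_three_mul_add (hP : P = 6 * t + 1) (M : ℕ) :
    #{i ∈ range M | (P : ℤ) ∣ 3 * ((i : ℕ) : ℤ) + (2 - 3 * j)}
      = (M + P - 1 - (j + 4 * t) % P) / P := by
  refine card_filter_dvd_mul_add (c := 3) (by omega) ⟨1, -2 * t, ?_⟩ ⟨2, ?_⟩ M <;>
    (subst hP; push_cast; ring)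

lemma le_mod_add_mod (hP : P = 6 * t + 1) (hjk : j ≤ k) :
    t ≤ (k - j) % P + (k + P - (j + 4 * t) % P) % P := by
  by_cases hβ : t ≤ (k - j) % P
  · omega
  have hdecomp : k + P - (j + 4 * t) % P
      = (k - j) % P + 2 * t + 1 + P * ((k - j) / P) + P * ((j + 4 * t) / P) := by
    have := Nat.div_add_mod (k - j) P
    have := Nat.div_add_mod (j + 4 * t) P
    generalize (k - j) % P = β at *
    generalize (j + 4 * t) % P = σ at *
    omega
  rw [hdecomp, Nat.add_mul_mod_self_left, Nat.add_mul_mod_self_left]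
  generalize (k - j) % P = β at *
  rw [Nat.mod_eq_of_lt (by omega)]
  omega

lemma le_card_filter_dvd_six_mul_add (hP : P = 6 * t + 1) (hjk : j ≤ k) (hkn : k < n) :
    j / P + (k - j) / P + #{i ∈ range (k + 1) | (P : ℤ) ∣ 3 * ((i : ℕ) : ℤ) + (2 - 3 * j)}
      ≤ #{i ∈ range (n + k + 1) | (P : ℤ) ∣ 6 * ((i : ℕ) : ℤ) + (5 - 6 * j)} := by
  have hP0 : 0 < P := by omega
  have hρ := Nat.add_mod_le_mod_add (j + 4 * t) t P
  have hkey := le_mod_add_mod hP hjk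
  have := Nat.div_add_mod' j P
  have := Nat.div_add_mod' (k - j) P
  have := Nat.div_add_mod' (k + P - (j + 4 * t) % P) P
  have := Nat.mod_lt (j + 4 * t) hP0
  rw [card_filter_dvd_three_mul_add hP, card_filter_dvd_six_mul_add hP,
    Nat.le_div_iff_mul_le hP0, add_mul, add_mul, show k + 1 + P - 1 = k + P by omega,
    show j + 5 * t = j + 4 * t + t by ring]
  omega

lemma lt_card_filter_dvd_six_mul_add (hP : P = 6 * t + 1) (hjk : j ≤ k) (hkn : k + t < n)
    (hdvd : P ∣ n - t) :
    j / P + (k - j) / P + #{i ∈ range (k + 1) | (P : ℤ) ∣ 3 * ((i : ℕ) : ℤ) + (2 - 3 * j)}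
      < #{i ∈ range (n + k + 1) | (P : ℤ) ∣ 6 * ((i : ℕ) : ℤ) + (5 - 6 * j)} := by
  have hP0 : 0 < P := by omega
  obtain ⟨M, hM⟩ := hdvd
  have hρ := Nat.add_mod_le_mod_add (j + 4 * t) t P
  have := Nat.mod_lt (j + 4 * t) hP0
  rw [card_filter_dvd_three_mul_add hP, card_filter_dvd_six_mul_add hP,
    show j + 5 * t = j + 4 * t + t by ring]
  have hdecomp : n + k + 1 + P - 1 - (j + 4 * t + t) % P = P * M
      + (k + 1 + P - 1 - (j + 4 * t) % P + ((j + 4 * t) % P + t - (j + 4 * t + t) % P)) := by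
    omega
  have hfac : j / P + (k - j) / P < M :=
    calc j / P + (k - j) / P ≤ (j + (k - j)) / P := Nat.div_add_div_le_add_div
      _ = k / P := by rw [Nat.add_sub_cancel' hjk]
      _ < M := (Nat.div_lt_iff_lt_mul hP0).2 (by rw [mul_comm]; omega)
  rw [hdecomp, Nat.mul_add_div hP0]
  have := Nat.div_le_div_right (c := P) (Nat.le_add_right (k + 1 + P - 1 - (j + 4 * t) % P)
    ((j + 4 * t) % P + t - (j + 4 * t + t) % P))
  omega

end Levels

/-- let p ≡ 1 (mod 6) be prime and n, k, j nonnegative integers with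
j ≤ k, k ≤ n − (p−1)/6 − 1 and n ≡ (p−1)/6 (mod p). Then the p-adic valuation of
(1/k!)·C(k,j)·(5/6 − j)_{n+k+1}/(2/3 − j)_{k+1} is at least 1. -/
theorem statement16 (p : ℕ) (hp : p.Prime) (hp1 : p % 6 = 1)
    (n k j : ℕ) (hj : j ≤ k) (hkn : k + (p - 1) / 6 + 1 ≤ n)
    (hn : n ≡ (p - 1) / 6 [MOD p]) :
    1 ≤ padicValRat p
        ((1 / (k.factorial : ℚ)) * (k.choose j : ℚ) *
          (ascPochhammer ℚ (n + k + 1)).eval (5 / 6 - (j : ℚ)) /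
          (ascPochhammer ℚ (k + 1)).eval (2 / 3 - (j : ℚ))) := by
  have := Fact.mk hp
  have hp7 : 7 ≤ p := by have := hp.two_le; omega
  have hp6 : ¬ p ∣ 6 := fun h => by have := Nat.le_of_dvd (by norm_num) h; omega
  have hp3 : ¬ p ∣ 3 := fun h => by have := Nat.le_of_dvd (by norm_num) h; omega
  set b := 6 * (n + k) + 6
  have hb : ∀ m < b, m < p ^ b := fun m hm => hm.trans (Nat.lt_pow_self hp.one_lt)
  have hne6 : ∀ i < n + k + 1, ((6 : ℕ) * i + (5 - 6 * j) : ℤ) ≠ 0 := fun i _ => by omega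
  have hne3 : ∀ i < k + 1, ((3 : ℕ) * i + (2 - 3 * j) : ℤ) ≠ 0 := fun i _ => by omega
  have hX := ascPochhammer_eval_div_ne_zero (by norm_num) _ hne6
  have hY := ascPochhammer_eval_div_ne_zero (by norm_num) _ hne3
  have hj! := Nat.cast_ne_zero (R := ℚ).2 j.factorial_ne_zero
  have hkj! := Nat.cast_ne_zero (R := ℚ).2 (k - j).factorial_ne_zero
  rw [show (5 / 6 - j : ℚ) = ((5 - 6 * j : ℤ) : ℚ) / (6 : ℕ) by push_cast; ring,
    show (2 / 3 - j : ℚ) = ((2 - 3 * j : ℤ) : ℚ) / (3 : ℕ) by push_cast; ring,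
    one_div_factorial_mul_choose_mul_div hj, padicValRat.div hX (by positivity),
    padicValRat.mul (by positivity) hY, padicValRat.mul hj! hkj!,
    ← padicValRat_of_nat, ← padicValRat_of_nat,
    padicValNat_factorial (b := b) (by have := Nat.log_le_self p j; omega),
    padicValNat_factorial (b := b) (by have := Nat.log_le_self p (k - j); omega),
    padicValRat_ascPochhammer_eval_div hp6 _ hne6 fun i hi => hb _ (by omega),
    padicValRat_ascPochhammer_eval_div hp3 _ hne3 fun i hi => hb _ (by omega)]
  have hlevels := one_add_sum_Ico_le (by omega : 1 < b)
    (lt_card_filter_dvd_six_mul_add (P := p ^ 1) (t := (p - 1) / 6) (n := n)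
      (by rw [pow_one]; omega) hj (by omega)
      (by rw [pow_one]; exact (Nat.modEq_iff_dvd' (by omega)).1 hn.symm))
    fun a _ => le_card_filter_dvd_six_mul_add (P := p ^ a) (t := p ^ a / 6) (n := n)
      (by have := Nat.pow_mod p a 6; rw [hp1, one_pow] at this; omega) hj (by omega)
  simp only [sum_add_distrib, Nat.cast_ofNat] at hlevels ⊢
  omega
end

section
/- Let p be a prime with p ≡ 1 (mod 6). Then v_p of the rational number (1/k!)·C(k,j)·(5/6 − j)_{n+k+1}/(2/3 − j)_{k+1} equals ∑_{ℓ≥1} ( −⌊j/p^ℓ⌋ − ⌊(k−j)/p^ℓ⌋ + ⌊(n+k−j+(p^ℓ+5)/6)/p^ℓ⌋ − ⌊(−j+(p^ℓ−1)/6)/p^ℓ⌋ − ⌊(k−j+(p^ℓ+2)/3)/p^ℓ⌋ + ⌊(−j+(p^ℓ−1)/3)/p^ℓ⌋ ), for all nonnegative integers n, k, j with j ≤ k. -/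
/-!
Write `5/6 - j` and `2/3 - j` as `r/d - j` with `(d, r) = (6, 5), (3, 2)`. Since `p ∤ d`, the factor
`r/d - j + i` of `(r/d - j)_{m+1}` has the same `p`-adic valuation as the integer `d i - d j + r`,
and the valuation of a product of nonzero integers is `∑_{ℓ ≥ 1} #{factors divisible by p^ℓ}`. For
`r = d - 1` and `p^ℓ = d t + 1` (which is where `p ≡ 1 (mod 6)` enters), `p^ℓ ∣ d i - d j + r`
exactly when `i ≡ j - t - 1 (mod p^ℓ)`, and the number of such `0 ≤ i ≤ m` is a difference of two
floors. Legendre's formula for `j!` and `(k - j)!`, whose product is `k! / C(k, j)`, accounts for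
the remaining terms.
-/

open Polynomial Finset
open scoped Nat

theorem card_filter_range_intCast_modEq {q : ℕ} (hq : 0 < q) (m : ℕ) (v : ℤ) :
    (#{i ∈ range (m + 1) | ((i : ℕ) : ℤ) ≡ v [ZMOD q]} : ℤ) =
      ⌊((m : ℚ) - v) / q⌋ - ⌊(-1 - v) / (q : ℚ)⌋ := by
  have hrange : (range (m + 1)).map Nat.castEmbedding = Ioc (-1 : ℤ) m := by
    ext x
    simp only [mem_map, mem_range, Nat.castEmbedding_apply, mem_Ioc]
    constructor
    · rintro ⟨i, hi, rfl⟩; omega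
    · intro hx; exact ⟨x.toNat, by omega, by omega⟩
  have hfilter : {i ∈ range (m + 1) | ((i : ℕ) : ℤ) ≡ v [ZMOD q]}.map Nat.castEmbedding =
      {x ∈ Ioc (-1 : ℤ) m | x ≡ v [ZMOD q]} := by
    rw [← hrange, filter_map]; rfl
  rw [← card_map, hfilter, Int.Ioc_filter_modEq_card _ _ (by exact_mod_cast hq), max_eq_left]
  · push_cast; ring_nf
  · exact sub_nonneg.mpr (Int.floor_mono (by gcongr; simp))

section ArithmeticProgression

variable {d r : ℕ}

theorem dvd_mul_sub_mul_add_iff_modEq {q t : ℕ} (hq : q = d * t + 1) (hdr : r + 1 = d)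
    (i j : ℕ) : (q : ℤ) ∣ d * i - d * j + r ↔ (i : ℤ) ≡ j - t - 1 [ZMOD q] := by
  have hco : IsCoprime (q : ℤ) d := ⟨1, -t, by rw [hq]; push_cast; ring⟩
  have hrw : (d * i - d * j + r : ℤ) = d * (i - (j - t - 1)) - q := by
    rw [hq, ← hdr]; push_cast; ring
  rw [hrw, dvd_sub_left dvd_rfl, Int.modEq_comm, Int.modEq_iff_dvd]
  exact ⟨hco.dvd_of_dvd_mul_left, fun h => dvd_mul_of_dvd_right h _⟩

theorem card_filter_range_dvd_mul_sub_mul_add {q : ℕ} (hq : q % d = 1) (hdr : r + 1 = d)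
    (j m : ℕ) :
    (#{i ∈ range (m + 1) | (q : ℤ) ∣ d * (i : ℕ) - d * j + r} : ℤ) =
      ⌊((m : ℚ) - j + ((q : ℚ) + r) / d) / q⌋ - ⌊(-(j : ℚ) + ((q : ℚ) - 1) / d) / q⌋ := by
  obtain ⟨t, ht⟩ : ∃ t, q = d * t + 1 := ⟨q / d, by have := Nat.div_add_mod q d; omega⟩
  rw [filter_congr fun i _ => dvd_mul_sub_mul_add_iff_modEq ht hdr i j,
    card_filter_range_intCast_modEq (by omega)]
  subst ht hdr
  congr 3 <;> push_cast <;> field_simp <;> ring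

theorem mul_sub_mul_add_ne_zero (hr : 0 < r) (hrd : r < d) (i j : ℕ) :
    (d * i - d * j + r : ℤ) ≠ 0 := by
  intro h
  have hdvd : (d : ℤ) ∣ r := ⟨j - i, by linear_combination h⟩
  have := Int.le_of_dvd (by omega) hdvd
  omega

theorem div_sub_add_eq_mul_sub_mul_add_div (hd : d ≠ 0) (i j : ℕ) :
    (r : ℚ) / d - j + i = ((d * i - d * j + r : ℤ) : ℚ) / d := by
  push_cast; field_simp; ring

theorem ascPochhammer_eval_div_sub_ne_zero (hr : 0 < r) (hrd : r < d) (j m : ℕ) :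
    (ascPochhammer ℚ m).eval ((r : ℚ) / d - j) ≠ 0 := by
  rw [ne_eq, ascPochhammer_eval_eq_zero_iff]
  rintro ⟨i, -, hi⟩
  have h0 : (r : ℚ) / d - j + i = 0 := by rw [hi]; ring
  rw [div_sub_add_eq_mul_sub_mul_add_div (by omega)] at h0
  exact mul_sub_mul_add_ne_zero hr hrd i j
    (by exact_mod_cast (div_eq_zero_iff.mp h0).resolve_right (Nat.cast_ne_zero.mpr (by omega)))

end ArithmeticProgression

theorem padicValInt_le_natAbs (p : ℕ) (x : ℤ) : padicValInt p x ≤ x.natAbs :=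
  (padicValNat_le_nat_log _).trans (Nat.log_le_self _ _)

section Valuation

variable {p : ℕ} [hp : Fact p.Prime]

theorem padicValInt_eq_card_filter_pow_dvd {x : ℤ} (hx : x ≠ 0) {M : ℕ}
    (hM : padicValInt p x ≤ M) : padicValInt p x = #{ℓ ∈ Icc 1 M | (p : ℤ) ^ ℓ ∣ x} := by
  have : {ℓ ∈ Icc 1 M | (p : ℤ) ^ ℓ ∣ x} = Icc 1 (padicValInt p x) := by
    ext ℓ
    simp only [mem_filter, mem_Icc, padicValInt_dvd_iff, hx, false_or]
    omega
  rw [this, Nat.card_Icc, Nat.add_sub_cancel]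

theorem sum_padicValInt_eq_sum_card_filter_pow_dvd {ι : Type*} (s : Finset ι) (f : ι → ℤ)
    (hf : ∀ i ∈ s, f i ≠ 0) {M : ℕ} (hM : ∀ i ∈ s, padicValInt p (f i) ≤ M) :
    ∑ i ∈ s, padicValInt p (f i) = ∑ ℓ ∈ Icc 1 M, #{i ∈ s | (p : ℤ) ^ ℓ ∣ f i} := by
  rw [sum_congr rfl fun i hi => padicValInt_eq_card_filter_pow_dvd (hf i hi) (hM i hi)]
  exact sum_card_bipartiteAbove_eq_sum_card_bipartiteBelow _

theorem padicValRat_ascPochhammer_eval {a : ℚ} {m : ℕ} (ha : (ascPochhammer ℚ m).eval a ≠ 0) :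
    padicValRat p ((ascPochhammer ℚ m).eval a) = ∑ i ∈ range m, padicValRat p (a + i) := by
  induction m with
  | zero => simp
  | succ m ih =>
    rw [ascPochhammer_succ_eval] at ha ⊢
    rw [padicValRat.mul (left_ne_zero_of_mul ha) (right_ne_zero_of_mul ha),
      ih (left_ne_zero_of_mul ha), sum_range_succ]

theorem padicValNat_factorial_eq_sum_floor {n M : ℕ} (hn : n ≤ M) :
    (padicValNat p n ! : ℤ) = ∑ ℓ ∈ Icc 1 M, ⌊(n : ℚ) / (p : ℚ) ^ ℓ⌋ := by
  rw [padicValNat_factorial (b := M + 1) (by have := Nat.log_le_self p n; omega),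
    Ico_add_one_right_eq_Icc, Nat.cast_sum]
  refine sum_congr rfl fun ℓ _ => ?_
  rw [← Nat.cast_pow, Rat.floor_natCast_div_natCast, Int.natCast_div]

theorem padicValRat_one_div_factorial_mul_choose {j k : ℕ} (hj : j ≤ k) :
    padicValRat p (1 / k ! * k.choose j) = -(padicValNat p j ! + padicValNat p (k - j)! : ℤ) := by
  have : (1 / k ! * k.choose j : ℚ) = ((j ! * (k - j)! : ℕ) : ℚ)⁻¹ := by
    rw [Nat.cast_choose ℚ hj]; push_cast; field_simp
  rw [this, padicValRat.inv, padicValRat.of_nat,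
    padicValNat.mul (Nat.factorial_ne_zero _) (Nat.factorial_ne_zero _)]
  push_cast; ring

theorem padicValRat_ascPochhammer_eval_div_sub {d r : ℕ} (hpd : p % d = 1) (hdr : r + 1 = d)
    (j m M : ℕ) (hM : d * (m + j + 1) ≤ M) :
    padicValRat p ((ascPochhammer ℚ (m + 1)).eval ((r : ℚ) / d - j)) =
      ∑ ℓ ∈ Icc 1 M, (⌊((m : ℚ) - j + ((p : ℚ) ^ ℓ + r) / d) / (p : ℚ) ^ ℓ⌋ -
        ⌊(-(j : ℚ) + ((p : ℚ) ^ ℓ - 1) / d) / (p : ℚ) ^ ℓ⌋) := by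
  have hd : d ≠ 1 := by rintro rfl; rw [Nat.mod_one] at hpd; exact zero_ne_one hpd
  have hr : 0 < r := by omega
  have hp_not_dvd : ¬ p ∣ d := by
    have hcop : Nat.Coprime d p := by rw [Nat.Coprime, Nat.gcd_rec, hpd, Nat.gcd_one_left]
    exact (Nat.Prime.coprime_iff_not_dvd hp.out).mp hcop.symm
  let f : ℕ → ℤ := fun i => d * i - d * j + r
  have hf : ∀ i, f i ≠ 0 := fun i => mul_sub_mul_add_ne_zero hr (by omega) i j
  have hval : ∀ i : ℕ, padicValRat p ((r : ℚ) / d - j + i) = padicValInt p (f i) := fun i => by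
    rw [div_sub_add_eq_mul_sub_mul_add_div (by omega),
      padicValRat.div (Int.cast_ne_zero.mpr (hf i)) (by exact_mod_cast (by omega : d ≠ 0)),
      padicValRat.of_int, padicValRat.of_nat,
      padicValNat.eq_zero_of_not_dvd hp_not_dvd, Nat.cast_zero, sub_zero]
  have hbound : ∀ i ∈ range (m + 1), padicValInt p (f i) ≤ M := fun i hi => by
    have hi : i ≤ m := Nat.lt_succ_iff.mp (mem_range.mp hi)
    have habs : (f i).natAbs ≤ d * (m + j + 1) := by
      zify
      rw [abs_le]
      constructor <;> nlinarith
    exact (padicValInt_le_natAbs p (f i)).trans (habs.trans hM)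
  rw [padicValRat_ascPochhammer_eval (ascPochhammer_eval_div_sub_ne_zero hr (by omega) j _),
    sum_congr rfl fun i _ => hval i, ← Nat.cast_sum,
    sum_padicValInt_eq_sum_card_filter_pow_dvd _ _ (fun i _ => hf i) hbound, Nat.cast_sum]
  refine sum_congr rfl fun ℓ _ => ?_
  have hpow : p ^ ℓ % d = 1 := by rw [Nat.pow_mod, hpd, one_pow, Nat.one_mod_eq_one.mpr hd]
  have hcount := card_filter_range_dvd_mul_sub_mul_add hpow hdr j m
  push_cast at hcount
  exact hcount

end Valuation

/-- Legendre-type formula. For a prime p ≡ 1 (mod 6) and j ≤ k,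
the p-adic valuation of (1/k!)·C(k,j)·(5/6 − j)_{n+k+1}/(2/3 − j)_{k+1} equals
∑_{ℓ≥1} (−⌊j/p^ℓ⌋ − ⌊(k−j)/p^ℓ⌋ + ⌊(n+k−j+(p^ℓ+5)/6)/p^ℓ⌋ − ⌊(−j+(p^ℓ−1)/6)/p^ℓ⌋
  − ⌊(k−j+(p^ℓ+2)/3)/p^ℓ⌋ + ⌊(−j+(p^ℓ−1)/3)/p^ℓ⌋);
the terms vanish for large ℓ, so the sum is formalized via its (eventually
constant) partial sums. -/
theorem statement17 (p : ℕ) (hp : p.Prime) (hp1 : p % 6 = 1)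
    (n k j : ℕ) (hj : j ≤ k) :
    ∃ L : ℕ, ∀ M : ℕ, L ≤ M →
      padicValRat p
          ((1 / (k.factorial : ℚ)) * (k.choose j : ℚ) *
            (ascPochhammer ℚ (n + k + 1)).eval (5 / 6 - (j : ℚ)) /
            (ascPochhammer ℚ (k + 1)).eval (2 / 3 - (j : ℚ)))
        = ∑ ℓ ∈ Icc 1 M,
            (-⌊(j : ℚ) / (p : ℚ) ^ ℓ⌋ - ⌊((k : ℚ) - j) / (p : ℚ) ^ ℓ⌋
              + ⌊((n : ℚ) + k - j + ((p : ℚ) ^ ℓ + 5) / 6) / (p : ℚ) ^ ℓ⌋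
              - ⌊(-(j : ℚ) + ((p : ℚ) ^ ℓ - 1) / 6) / (p : ℚ) ^ ℓ⌋
              - ⌊((k : ℚ) - j + ((p : ℚ) ^ ℓ + 2) / 3) / (p : ℚ) ^ ℓ⌋
              + ⌊(-(j : ℚ) + ((p : ℚ) ^ ℓ - 1) / 3) / (p : ℚ) ^ ℓ⌋) := by
  have := Fact.mk hp
  refine ⟨6 * (n + k + j + 1), fun M hM => ?_⟩
  have hA := padicValRat_ascPochhammer_eval_div_sub (d := 6) (r := 5) hp1 rfl j (n + k) M hM
  have hB := padicValRat_ascPochhammer_eval_div_sub (d := 3) (r := 2) (p := p) (by omega) rfl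
    j k M (by omega)
  have hA0 := ascPochhammer_eval_div_sub_ne_zero (d := 6) (r := 5) (by norm_num) (by norm_num)
    j (n + k + 1)
  have hB0 := ascPochhammer_eval_div_sub_ne_zero (d := 3) (r := 2) (by norm_num) (by norm_num)
    j (k + 1)
  push_cast at hA hB hA0 hB0
  have hC0 : 1 / (k ! : ℚ) * k.choose j ≠ 0 :=
    mul_ne_zero (by positivity) (Nat.cast_ne_zero.mpr (Nat.choose_pos hj).ne')
  have hjfac := padicValNat_factorial_eq_sum_floor (p := p) (n := j) (M := M) (by omega)
  have hkjfac := padicValNat_factorial_eq_sum_floor (p := p) (n := k - j) (M := M) (by omega)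
  rw [Nat.cast_sub hj] at hkjfac
  rw [padicValRat.div (mul_ne_zero hC0 hA0) hB0, padicValRat.mul hC0 hA0,
    padicValRat_one_div_factorial_mul_choose hj, hA, hB, hjfac, hkjfac]
  simp only [sum_add_distrib, sum_sub_distrib, sum_neg_distrib]
  ring
end

section
/- If a formal power series F(z) over ℤ satisfies the Riccati equation (1 − Az)F − Bz²F′ − CzF² − 1 − Dz = 0 with integer parameters A, B, C, D, and a rational function R(z) = P(z)/Q(z) with P, Q ∈ ℤ[z], Q(0) = 1, satisfies (1 − Az)R − Bz²R′ − CzR² − 1 − Dz ≡ 0 modulo p^α (as a congruence of formal power series, for a prime p and α ≥ 1), then F(z) ≡ R(z) modulo p^α, i.e., all coefficients of F agree with those of the power series expansion of R modulo p^α. -/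
/-!
Over any commutative ring the Riccati equation has at most one power-series solution: the
difference `H` of two solutions satisfies `H = X * (a H + b X H' + K H)`, and since `X H'` is
divisible by every power of `X` dividing `H`, this forces `X ^ n ∣ H` for all `n`. Reducing
modulo `p ^ α`, the series `F` and `R` both solve the Riccati equation over `ℤ ⧸ (p ^ α)`.
-/

open PowerSeries

namespace PowerSeries

variable {S T : Type*} [CommRing S] [CommRing T]

noncomputable def riccati (a b c d : S) (F : S⟦X⟧) : S⟦X⟧ :=
  (1 - C a * X) * F - C b * X ^ 2 * d⁄dX S F - C c * X * F ^ 2 - 1 - C d * X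

theorem map_derivative (f : S →+* T) (F : S⟦X⟧) :
    map f (d⁄dX S F) = d⁄dX T (map f F) := by
  ext n
  simp [coeff_derivative]

theorem map_riccati (f : S →+* T) (a b c d : S) (F : S⟦X⟧) :
    map f (riccati a b c d F) = riccati (f a) (f b) (f c) (f d) (map f F) := by
  simp [riccati, map_derivative]

theorem riccati_sub_riccati (a b c d : S) (F G : S⟦X⟧) :
    riccati a b c d F - riccati a b c d G =
      (1 - C a * X) * (F - G) - C b * X ^ 2 * d⁄dX S (F - G) - X * (C c * (F + G)) * (F - G) := by
  simp only [riccati, map_sub]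
  ring

theorem X_pow_dvd_X_mul_derivative {n : ℕ} {F : S⟦X⟧} (h : X ^ n ∣ F) :
    X ^ n ∣ X * d⁄dX S F := by
  rw [X_pow_dvd_iff] at h ⊢
  rintro (_ | m) hm
  · simp
  · rw [coeff_succ_X_mul, coeff_derivative, h (m + 1) hm, zero_mul]

theorem eq_zero_of_linearized_riccati_eq_zero (a b : S) (K H : S⟦X⟧)
    (h : (1 - C a * X) * H - C b * X ^ 2 * d⁄dX S H - X * K * H = 0) : H = 0 := by
  have hH : H = X * (C a * H + C b * (X * d⁄dX S H) + K * H) := by linear_combination h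
  have hdvd : ∀ n, X ^ n ∣ H := by
    intro n
    induction n with
    | zero => exact one_dvd H
    | succ n ih =>
      rw [hH, pow_succ']
      refine mul_dvd_mul_left X (dvd_add (dvd_add ?_ ?_) ?_)
      · exact dvd_mul_of_dvd_right ih _
      · exact dvd_mul_of_dvd_right (X_pow_dvd_X_mul_derivative ih) _
      · exact dvd_mul_of_dvd_right ih _
  ext m
  exact X_pow_dvd_iff.mp (hdvd (m + 1)) m m.lt_succ_self

theorem riccati_injective (a b c d : S) : Function.Injective (riccati a b c d) := by
  intro F G hFG
  rw [← sub_eq_zero]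
  refine eq_zero_of_linearized_riccati_eq_zero a b (C c * (F + G)) (F - G) ?_
  rw [← riccati_sub_riccati, hFG, sub_self]

end PowerSeries

theorem statement19_general (A B C D : ℤ) (p : ℕ) (α : ℕ)
    (F : PowerSeries ℤ)
    (hF : (1 - PowerSeries.C A * PowerSeries.X) * F - PowerSeries.C B * PowerSeries.X ^ 2 * F.derivativeFun -
      PowerSeries.C C * PowerSeries.X * F ^ 2 - 1 - PowerSeries.C D * PowerSeries.X = 0)
    (R : PowerSeries ℤ)
    (hRmod : ∀ m : ℕ, (p : ℤ) ^ α ∣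
      (PowerSeries.coeff m)
        ((1 - PowerSeries.C A * PowerSeries.X) * R - PowerSeries.C B * PowerSeries.X ^ 2 * R.derivativeFun -
          PowerSeries.C C * PowerSeries.X * R ^ 2 - 1 - PowerSeries.C D * PowerSeries.X)) :
    ∀ m : ℕ, (p : ℤ) ^ α ∣ (PowerSeries.coeff m) F - (PowerSeries.coeff m) R := by
  let φ := Ideal.Quotient.mk (Ideal.span {(p : ℤ) ^ α})
  have hφ : ∀ x : ℤ, φ x = 0 ↔ (p : ℤ) ^ α ∣ x := fun x => by
    rw [Ideal.Quotient.eq_zero_iff_mem, Ideal.mem_span_singleton]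
  have hR : map φ (riccati A B C D R) = 0 := by
    ext m
    rw [coeff_map, map_zero]
    exact (hφ _).mpr (hRmod m)
  have hFR : map φ F = map φ R := by
    refine riccati_injective (φ A) (φ B) (φ C) (φ D) ?_
    rw [← map_riccati, ← map_riccati, hR, show riccati A B C D F = 0 from hF, map_zero]
  intro m
  rw [← hφ, map_sub, sub_eq_zero, ← coeff_map, ← coeff_map, hFR]

/-- if a formal power series F over ℤ satisfies the Riccati equation
(1−Az)F − Bz²F′ − CzF² − 1 − Dz = 0 with A, B, C, D ∈ ℤ, and a rational function
R = P/Q (P, Q ∈ ℤ[z], Q(0) = 1, expanded as a power series) satisfies the same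
equation modulo p^α coefficientwise, then all coefficients of F and R agree
modulo p^α. -/
theorem statement19 (A B C D : ℤ) (p : ℕ) (hp : p.Prime) (α : ℕ) (hα : 1 ≤ α)
    (F : PowerSeries ℤ)
    (hF : (1 - PowerSeries.C A * PowerSeries.X) * F - PowerSeries.C B * PowerSeries.X ^ 2 * F.derivativeFun -
      PowerSeries.C C * PowerSeries.X * F ^ 2 - 1 - PowerSeries.C D * PowerSeries.X = 0)
    (P Q : Polynomial ℤ) (hQ0 : Q.coeff 0 = 1)
    (R : PowerSeries ℤ)
    (hR : R = (P : PowerSeries ℤ) * PowerSeries.invOfUnit (Q : PowerSeries ℤ) 1)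
    (hRmod : ∀ m : ℕ, (p : ℤ) ^ α ∣
      (PowerSeries.coeff m)
        ((1 - PowerSeries.C A * PowerSeries.X) * R - PowerSeries.C B * PowerSeries.X ^ 2 * R.derivativeFun -
          PowerSeries.C C * PowerSeries.X * R ^ 2 - 1 - PowerSeries.C D * PowerSeries.X)) :
    ∀ m : ℕ, (p : ℤ) ^ α ∣ (PowerSeries.coeff m) F - (PowerSeries.coeff m) R :=
  statement19_general A B C D p α F hF R hRmod
end
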